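/- With notation as above (μ dominant minuscule, w = t_λ w̄ μ-admissible, w_λ the minimal coset representative of t_λ W), there is a bijection between the set of paths from w to t_λ in the Bruhat graph of the affine Weyl group and the set of paths from w_λ⁻¹ w̄ to w_λ⁻¹ in the Bruhat graph of the finite Weyl group W, which preserves the edge sets (and hence edge orderings with respect to any reflection ordering). -/

import Mathlib

open CoxeterSystem

/-- A directed path in the Bruhat graph of a Coxeter system from `u` to `v`,
recorded by its list of edge reflections `ts`. -/
def IsBruhatPath {B W : Type*} [Group W] {M : CoxeterMatrix B} (cs : CoxeterSystem M W)
    (u v : W) (ts : List W) : Prop :=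
  (∀ t ∈ ts, cs.IsReflection t) ∧ u * ts.prod = v ∧
    ∀ k < ts.length,
      cs.length (u * (ts.take k).prod) < cs.length (u * (ts.take (k + 1)).prod)

/-- The Bruhat order on a Coxeter group. -/
def BruhatLE {B W : Type*} [Group W] {M : CoxeterMatrix B} (cs : CoxeterSystem M W)
    (u v : W) : Prop :=
  Relation.ReflTransGen
    (fun a b => (∃ t, cs.IsReflection t ∧ b = a * t) ∧ cs.length a < cs.length b) u v

/-!
Put `u = t_λ w_λ`. Since `u` has minimal length in its coset `u W`, lengths add:
`ℓ (u x) = ℓ u + ℓ x` for `x ∈ W`. This is the usual exchange argument; the exchange condition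
comes from Tits' sign representation of the Coxeter group on `W × {±1}`, which shows that the
parity of the number of occurrences of a reflection in the inversion sequence of a word only
depends on the product of the word. Since `t_λ w̄ = u (w_λ⁻¹ w̄)`, `t_λ = u w_λ⁻¹` and all edge
reflections lie in `W`, every vertex of such a path is `u x` with `x ∈ W`, so the length
conditions along a path from `t_λ w̄` to `t_λ` are those along the path with the same edges from
`w_λ⁻¹ w̄` to `w_λ⁻¹`, shifted by `ℓ u`.
-/
theorem List.count_map_mulAutConj {G : Type*} [Group G] [DecidableEq G] (g t : G) (l : List G) :
    (l.map (MulAut.conj g)).count t = l.count (g⁻¹ * t * g) := by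
  conv_lhs => rw [show t = MulAut.conj g (g⁻¹ * t * g) by simp [mul_assoc]]
  exact List.count_map_of_injective _ _ (MulAut.conj g).injective _

namespace CoxeterSystem

variable {B W : Type*} [Group W] {M : CoxeterMatrix B} (cs : CoxeterSystem M W)

local prefix:100 "s" => cs.simple
local prefix:100 "π" => cs.wordProd
local prefix:100 "ℓ" => cs.length
local prefix:100 "ris " => cs.rightInvSeq
local prefix:100 "lis " => cs.leftInvSeq

theorem alternatingWord_two_mul_succ (i i' : B) (m : ℕ) :
    alternatingWord i i' (2 * (m + 1)) = i :: i' :: alternatingWord i i' (2 * m) := by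
  rw [show 2 * (m + 1) = 2 * m + 1 + 1 by ring, alternatingWord_succ', alternatingWord_succ']
  simp

theorem prod_map_alternatingWord_two_mul {G : Type*} [Monoid G] (f : B → G) (i i' : B) (m : ℕ) :
    ((alternatingWord i i' (2 * m)).map f).prod = (f i * f i') ^ m := by
  induction m with
  | zero => simp [alternatingWord]
  | succ m ih => rw [alternatingWord_two_mul_succ, List.map_cons, List.map_cons, List.prod_cons,
      List.prod_cons, ih, pow_succ', mul_assoc]

theorem wordProd_alternatingWord_periodic (i i' : B) (k : ℕ) :
    π alternatingWord i' i (2 * (k + M i i') + 1) = π alternatingWord i' i (2 * k + 1) := by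
  simp only [prod_alternatingWord_eq_mul_pow, show ∀ n, (2 * n + 1) / 2 = n by omega, pow_add,
    simple_mul_simple_pow', mul_one, Nat.even_add_one, even_two_mul, not_true_eq_false,
    if_false]

theorem leftInvSeq_alternatingWord_two_mul (i i' : B) :
    lis (alternatingWord i i' (2 * M i i')) =
      (List.range (M i i')).map (fun k => π alternatingWord i' i (2 * k + 1)) ++
        (List.range (M i i')).map (fun k => π alternatingWord i' i (2 * k + 1)) := by
  refine List.ext_getElem ?_ fun k hk _ => ?_
  · simp only [length_leftInvSeq, length_alternatingWord, List.length_append, List.length_map,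
      List.length_range]
    ring
  rw [getElem_leftInvSeq_alternatingWord cs i i' _ k (by simpa using hk), List.getElem_append]
  split_ifs with h
  · simp
  · simp only [List.getElem_map, List.getElem_range, List.length_map, List.length_range]
    rw [← wordProd_alternatingWord_periodic cs i i' (k - M i i')]
    simp only [List.length_map, List.length_range, not_lt] at h
    congr 2
    omega

section SignRepresentation

variable [DecidableEq W]

def simpleSignPerm (i : B) : Equiv.Perm (W × ℤˣ) :=
  Function.Involutive.toPerm (fun p => (s i * p.1 * s i, if p.1 = s i then -p.2 else p.2)) <| by
    rintro ⟨t, ε⟩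
    by_cases ht : t = s i
    · simp [ht, cs.simple_mul_simple_self]
    · have : s i * t * s i ≠ s i := fun h => ht (by
        simpa [mul_assoc, cs.simple_mul_simple_self] using congrArg (s i * · * s i) h)
      simp [ht, this, ← mul_assoc, cs.simple_mul_simple_self]

theorem simpleSignPerm_apply (i : B) (p : W × ℤˣ) :
    cs.simpleSignPerm i p = (s i * p.1 * s i, if p.1 = s i then -p.2 else p.2) := rfl

theorem simpleSignPerm_inv (i : B) : (cs.simpleSignPerm i)⁻¹ = cs.simpleSignPerm i :=
  Function.Involutive.toPerm_symm _

theorem prod_map_simpleSignPerm_inv_apply (ω : List B) (p : W × ℤˣ) :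
    (ω.map cs.simpleSignPerm).prod⁻¹ p =
      ((π ω)⁻¹ * p.1 * π ω, (-1) ^ (lis ω).count p.1 * p.2) := by
  induction ω generalizing p with
  | nil => simp
  | cons i ω ih =>
    obtain ⟨t, ε⟩ := p
    have hcount : (lis (i :: ω)).count t =
        (lis ω).count (s i * t * s i) + if t = s i then 1 else 0 := by
      rw [leftInvSeq, List.count_cons, List.count_map_mulAutConj, inv_simple]
      simp only [beq_iff_eq, eq_comm (a := s i)]
    simp only [List.map_cons, List.prod_cons, mul_inv_rev, Equiv.Perm.mul_apply,
      simpleSignPerm_inv, simpleSignPerm_apply, ih, wordProd_cons, hcount]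
    refine Prod.ext (by simp [inv_simple, mul_assoc]) ?_
    split_ifs <;> simp [pow_succ]

theorem isLiftable_simpleSignPerm : M.IsLiftable cs.simpleSignPerm := by
  intro i i'
  rw [← prod_map_alternatingWord_two_mul]
  refine inv_injective (Equiv.ext fun p => ?_)
  have hprod : π alternatingWord i i' (2 * M i i') = 1 := by
    rw [wordProd, prod_map_alternatingWord_two_mul, simple_mul_simple_pow]
  have hcount : Even ((lis alternatingWord i i' (2 * M i i')).count p.1) := by
    rw [leftInvSeq_alternatingWord_two_mul, List.count_append]
    exact ⟨_, rfl⟩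
  simp [prod_map_simpleSignPerm_inv_apply, hprod, hcount.neg_one_pow]

theorem neg_one_pow_count_leftInvSeq_eq {ω ω' : List B} (h : π ω = π ω') (t : W) :
    (-1 : ℤˣ) ^ (lis ω).count t = (-1) ^ (lis ω').count t := by
  set φ := cs.lift ⟨_, cs.isLiftable_simpleSignPerm⟩
  have hφ (ω : List B) : φ (π ω) = (ω.map cs.simpleSignPerm).prod := by
    rw [wordProd, map_list_prod, List.map_map]
    exact congrArg _ (List.map_congr_left fun i _ => cs.lift_apply_simple _ i)
  have := congrArg (fun w => ((φ w)⁻¹ (t, 1)).2) h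
  simpa [hφ, prod_map_simpleSignPerm_inv_apply] using this

end SignRepresentation

theorem simple_mem_leftInvSeq {ω : List B} {i : B} (h : ℓ (s i * π ω) < ℓ (π ω)) :
    s i ∈ lis ω := by
  classical
  obtain ⟨α, hα, hαω⟩ := cs.exists_isReduced (s i * π ω)
  have hword : π (i :: α) = π ω := by
    rw [wordProd_cons, ← hαω, ← mul_assoc, simple_mul_simple_self, one_mul]
  have hα_count : (lis α).count (s i) = 0 := by
    refine List.count_eq_zero.mpr fun hmem => ?_
    have := (cs.isLeftInversion_of_mem_leftInvSeq hα hmem).2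
    rw [← hαω, ← mul_assoc, simple_mul_simple_self, one_mul] at this
    omega
  have hcount : (lis (i :: α)).count (s i) = 1 := by
    rw [leftInvSeq, List.count_cons_self, List.count_map_mulAutConj, inv_simple,
      simple_mul_simple_cancel_right, hα_count]
  by_contra hnot
  have := cs.neg_one_pow_count_leftInvSeq_eq hword (s i)
  rw [hcount, List.count_eq_zero.mpr hnot] at this
  exact absurd this (by decide)

theorem simple_mem_rightInvSeq {ω : List B} {i : B} (h : ℓ (π ω * s i) < ℓ (π ω)) :
    s i ∈ ris ω := by
  rw [← List.reverse_reverse ω, rightInvSeq_reverse, List.mem_reverse]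
  apply simple_mem_leftInvSeq
  rwa [wordProd_reverse, ← inv_simple, ← mul_inv_rev, length_inv, length_inv]

theorem rightInvSeq_append (ω ω' : List B) :
    ris (ω ++ ω') = (ris ω).map (MulAut.conj (π ω')⁻¹) ++ ris ω' := by
  induction ω with
  | nil => simp
  | cons i ω ih =>
    simp only [List.cons_append, rightInvSeq, ih, List.map_cons, wordProd_append,
      MulAut.conj_apply, mul_inv_rev, inv_inv]
    group

theorem length_mul_mul_simple {u y : W} {i : B} (huy : ℓ (u * y) = ℓ u + ℓ y)
    (hu : ℓ u ≤ ℓ (u * (y * s i * y⁻¹))) : ℓ (u * (y * s i)) = ℓ u + ℓ (y * s i) := by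
  have hyi := cs.length_mul_simple y i
  rcases cs.length_mul_simple (u * y) i with hup | hdown
  · have := cs.length_mul_le u (y * s i)
    rw [mul_assoc] at hup
    omega
  rw [mul_assoc] at hdown
  obtain ⟨γ, hγ, rfl⟩ := cs.exists_isReduced u
  obtain ⟨δ, hδ, rfl⟩ := cs.exists_isReduced y
  have hmem := cs.simple_mem_rightInvSeq (ω := γ ++ δ) (i := i)
    (by rw [wordProd_append, mul_assoc]; omega)
  -- `s i` is a right inversion coming either from `δ`, or, conjugated by `π δ`, from `γ`;
  -- the latter would shorten `u` within its coset.
  rw [rightInvSeq_append, List.mem_append, List.mem_map] at hmem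
  rcases hmem with ⟨t, ht, hts⟩ | hmem
  · have ht' : t = π δ * s i * (π δ)⁻¹ := by
      rw [← hts]; simp [mul_assoc]
    have := (cs.isRightInversion_of_mem_rightInvSeq hγ ht).2
    rw [ht', hγ.eq] at this
    rw [hγ.eq] at hu
    omega
  · have := (cs.isRightInversion_of_mem_rightInvSeq hδ hmem).2
    omega

theorem length_mul_eq_add_of_forall_length_le {J : Set B} {u : W}
    (hu : ∀ z ∈ Subgroup.closure (cs.simple '' J), ℓ u ≤ ℓ (u * z)) {x : W}
    (hx : x ∈ Subgroup.closure (cs.simple '' J)) : ℓ (u * x) = ℓ u + ℓ x := by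
  have hstep (y : W) (hy : y ∈ Subgroup.closure (cs.simple '' J)) (i : B) (hi : i ∈ J)
      (ih : ℓ (u * y) = ℓ u + ℓ y) : ℓ (u * (y * s i)) = ℓ u + ℓ (y * s i) :=
    cs.length_mul_mul_simple ih <| hu _ <|
      mul_mem (mul_mem hy (Subgroup.subset_closure ⟨i, hi, rfl⟩)) (inv_mem hy)
  induction hx using Subgroup.closure_induction_right with
  | one => simp
  | mul_right y hy r hr ih =>
    obtain ⟨i, hi, rfl⟩ := hr
    exact hstep y hy i hi ih
  | mul_inv_cancel y hy r hr ih =>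
    obtain ⟨i, hi, rfl⟩ := hr
    rw [inv_simple]
    exact hstep y hy i hi ih

theorem isBruhatPath_mul_left_iff {H : Subgroup W} {u a b : W} {ts : List W}
    (hu : ∀ x ∈ H, ℓ (u * x) = ℓ u + ℓ x) (ha : a ∈ H) (hts : ∀ t ∈ ts, t ∈ H) :
    IsBruhatPath cs (u * a) (u * b) ts ↔ IsBruhatPath cs a b ts := by
  have hlen (k : ℕ) : ℓ (u * (a * (ts.take k).prod)) = ℓ u + ℓ (a * (ts.take k).prod) :=
    hu _ (mul_mem ha (list_prod_mem fun t ht => hts t (List.take_subset _ _ ht)))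
  simp only [IsBruhatPath, mul_assoc, hlen, mul_right_inj, add_lt_add_iff_left]

end CoxeterSystem

theorem stmt16_general {B Waff : Type*} [Group Waff] {M : CoxeterMatrix B}
    (cs : CoxeterSystem M Waff) (J : Set B)
    (tl wb wl : Waff)
    (hwb : wb ∈ Subgroup.closure (cs.simple '' J))
    (hwl : wl ∈ Subgroup.closure (cs.simple '' J))
    (hmin : ∀ x ∈ Subgroup.closure (cs.simple '' J),
      cs.length (tl * wl) ≤ cs.length (tl * x))
    (hfin : ∀ ts : List Waff, IsBruhatPath cs (tl * wb) tl ts →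
      ∀ t ∈ ts, t ∈ Subgroup.closure (cs.simple '' J)) :
    ∀ ts : List Waff,
      IsBruhatPath cs (tl * wb) tl ts ↔
        ((∀ t ∈ ts, t ∈ Subgroup.closure (cs.simple '' J)) ∧
          IsBruhatPath cs (wl⁻¹ * wb) wl⁻¹ ts) := by
  intro ts
  have hadd : ∀ x ∈ Subgroup.closure (cs.simple '' J),
      cs.length (tl * wl * x) = cs.length (tl * wl) + cs.length x :=
    fun x => cs.length_mul_eq_add_of_forall_length_le fun z hz => by
      simpa only [mul_assoc] using hmin _ (mul_mem hwl hz)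
  have hshift (hts : ∀ t ∈ ts, t ∈ Subgroup.closure (cs.simple '' J)) :
      IsBruhatPath cs (tl * wb) tl ts ↔ IsBruhatPath cs (wl⁻¹ * wb) wl⁻¹ ts := by
    have := cs.isBruhatPath_mul_left_iff (b := wl⁻¹) hadd (mul_mem (inv_mem hwl) hwb) hts
    rwa [mul_inv_cancel_right, mul_assoc, mul_inv_cancel_left] at this
  exact ⟨fun h => ⟨hfin ts h, (hshift (hfin ts h)).1 h⟩, fun ⟨hts, h⟩ => (hshift hts).2 h⟩

/-- With `μ` dominant minuscule, `w = t_λ·w̄` a `μ`-admissible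
element of the affine Weyl group (so `w ≤ t_λ` in Bruhat order), `W` the finite
Weyl group (the standard parabolic subgroup generated by the simple reflections
indexed by `J`), and `w_λ = wl` the minimal coset representative of `t_λ W`
(so that `t_λ w_λ` has minimal length in `t_λ W`): since every edge reflection
of a Bruhat path from `w` to `t_λ` lies in `W` (hypothesis `hfin`, the previous
statement), there is a bijection — given by keeping the same list of edge
reflections — between the Bruhat-graph paths from `w` to `t_λ` in the affine
Weyl group and the Bruhat-graph paths from `w_λ⁻¹·w̄` to `w_λ⁻¹` in the finite
Weyl group `W`, preserving edge sets (and hence edge orderings with respect to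
any reflection ordering). -/
theorem stmt16 {B Waff : Type*} [Group Waff] {M : CoxeterMatrix B}
    (cs : CoxeterSystem M Waff) (J : Set B)
    (tl wb wl : Waff)
    (hwb : wb ∈ Subgroup.closure (cs.simple '' J))
    (hwl : wl ∈ Subgroup.closure (cs.simple '' J))
    (hmin : ∀ x ∈ Subgroup.closure (cs.simple '' J),
      cs.length (tl * wl) ≤ cs.length (tl * x))
    (hadm : BruhatLE cs (tl * wb) tl)
    (hfin : ∀ ts : List Waff, IsBruhatPath cs (tl * wb) tl ts →
      ∀ t ∈ ts, t ∈ Subgroup.closure (cs.simple '' J)) :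
    ∀ ts : List Waff,
      IsBruhatPath cs (tl * wb) tl ts ↔
        ((∀ t ∈ ts, t ∈ Subgroup.closure (cs.simple '' J)) ∧
          IsBruhatPath cs (wl⁻¹ * wb) wl⁻¹ ts) :=
  stmt16_general cs J tl wb wl hwb hwl hmin hfin
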